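/- Every GNO-preferred answer set of a logic program with preferences is a preferred answer set under the fragment-based semantics G (i.e., GNO ⊆ G). -/

import Mathlib

/-- A literal over atoms `A`: `(true, a)` is the atom `a`, `(false, a)` is `¬ a`. -/
abbrev Lit (A : Type) := Bool × A

/-- A rule with head, positive body and negative body. -/
structure Rule (A : Type) where
  head : Lit A
  pos : Set (Lit A)
  neg : Set (Lit A)

variable {A : Type}

/-- Heads of a set of rules. -/
def headSet (R : Set (Rule A)) : Set (Lit A) := Rule.head '' R

/-- `R ⊆ P` positively satisfies `P`. -/
def PosSat (P R : Set (Rule A)) : Prop :=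
  R ⊆ P ∧ ∀ r ∈ P, r.pos ⊆ headSet R → r ∈ R

/-- The minimal set of rules positively satisfying `P`. -/
def MP (P : Set (Rule A)) : Set (Rule A) := ⋂₀ {R | PosSat P R}

/-- A set of rules defeats a rule. -/
def defeatsRule (R : Set (Rule A)) (r : Rule A) : Prop :=
  (headSet R ∩ r.neg).Nonempty

/-- A set of rules defeats a set of rules. -/
def defeatsSet (R₁ R₂ : Set (Rule A)) : Prop := ∃ r ∈ R₂, defeatsRule R₁ r

/-- The reduct `P^R` removes each rule defeated by `R`. -/
def reduct (P R : Set (Rule A)) : Set (Rule A) := {r ∈ P | ¬ defeatsRule R r}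

/-- `R ⊆ P` is a generating set of `P` iff `R = MP (P^R)`. -/
def GenSet (P R : Set (Rule A)) : Prop := R ⊆ P ∧ R = MP (reduct P R)

/-- A set of literals is consistent iff it contains no complementary pair. -/
def Consistent (S : Set (Lit A)) : Prop :=
  ∀ a : A, ¬ (((true, a) ∈ S) ∧ ((false, a) ∈ S))

/-- Answer sets via generating sets. -/
def AnswerSet (P : Set (Rule A)) (S : Set (Lit A)) : Prop :=
  Consistent S ∧ ∃ R, GenSet P R ∧ headSet R = S

/-- `Γ_S(P)`: rules whose positive body is in `S` and negative body disjoint from `S`. -/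
def Gamma (S : Set (Lit A)) (P : Set (Rule A)) : Set (Rule A) :=
  {r ∈ P | r.pos ⊆ S ∧ r.neg ∩ S = ∅}

/-- Fragments of a program. -/
def Frag (P : Set (Rule A)) : Set (Set (Rule A)) := {R | R ⊆ P ∧ MP R = R}

/-- Fragment reduct: remove fragments defeated by a member of `E`. -/
def fragReduct (P : Set (Rule A)) (E : Set (Set (Rule A))) : Set (Set (Rule A)) :=
  {X ∈ Frag P | ¬ ∃ Y ∈ E, defeatsSet Y X}

/-- Stable fragment sets. -/
def StableFragSet (P : Set (Rule A)) (E : Set (Set (Rule A))) : Prop :=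
  E ⊆ Frag P ∧ fragReduct P E = E

/-- Mutually defeating (conflicting) sets of rules. -/
def Conflicting (X Y : Set (Rule A)) : Prop := defeatsSet X Y ∧ defeatsSet Y X

/-- `X` overrides `Y` w.r.t. the preference relation `lt`. -/
def Overrides (lt : Rule A → Rule A → Prop) (X Y : Set (Rule A)) : Prop :=
  Conflicting X Y ∧
    ∀ r₁ ∈ X, defeatsRule Y r₁ → ∃ r₂ ∈ Y, defeatsRule X r₂ ∧ lt r₂ r₁

/-- Preferred fragment reduct (semantics G). -/
def prefFragReduct (lt : Rule A → Rule A → Prop) (P : Set (Rule A))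
    (E : Set (Set (Rule A))) : Set (Set (Rule A)) :=
  {X ∈ Frag P | ¬ ∃ Y ∈ E, defeatsSet Y X ∧ ¬ Overrides lt X Y}

/-- Preferred stable fragment sets (semantics G). -/
def PrefStableFragSet (lt : Rule A → Rule A → Prop) (P : Set (Rule A))
    (E : Set (Set (Rule A))) : Prop :=
  E ⊆ Frag P ∧ prefFragReduct lt P E = E

/-- Preferred answer sets under the fragment-based semantics G. -/
def GPrefAnswerSet (lt : Rule A → Rule A → Prop) (P : Set (Rule A))
    (S : Set (Lit A)) : Prop :=
  Consistent S ∧ ∃ E, PrefStableFragSet lt P E ∧ headSet (⋃₀ E) = S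

/-- `T(r,R)` for semantics GNO. -/
def Trules (lt : Rule A → Rule A → Prop) (r : Rule A) (R : Set (Rule A)) :
    Set (Rule A) :=
  MP {p ∈ R | ¬ lt p r}

/-- GNO reduct: remove rules `r` with `body⁻(r) ∩ head(T(r,R)) ≠ ∅`. -/
def gnoReduct (lt : Rule A → Rule A → Prop) (P R : Set (Rule A)) : Set (Rule A) :=
  {r ∈ P | ¬ (r.neg ∩ headSet (Trules lt r R)).Nonempty}

/-- GNO-preferred generating sets. -/
def GNOPrefGen (lt : Rule A → Rule A → Prop) (P R : Set (Rule A)) : Prop :=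
  GenSet P R ∧ R = MP (gnoReduct lt P R)

/-- GNO-preferred answer sets. -/
def GNOPrefAnswerSet (lt : Rule A → Rule A → Prop) (P : Set (Rule A))
    (S : Set (Lit A)) : Prop :=
  Consistent S ∧ ∃ R, GNOPrefGen lt P R ∧ headSet R = S

/-- A rule defeats a rule. -/
def defeats (r₁ r₂ : Rule A) : Prop := r₁.head ∈ r₂.neg

/-- `r₁` directly overrides `r₂` w.r.t. `lt`. -/
def DirOverrides (lt : Rule A → Rule A → Prop) (r₁ r₂ : Rule A) : Prop :=
  (defeats r₁ r₂ ∧ defeats r₂ r₁) ∧ lt r₂ r₁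

/-- D-reduct for the direct-conflict semantics. -/
def dReduct (lt : Rule A → Rule A → Prop) (P R : Set (Rule A)) : Set (Rule A) :=
  {r₁ ∈ P | ¬ ∃ r₂ ∈ R, defeats r₂ r₁ ∧ ¬ DirOverrides lt r₁ r₂}

/-- D-preferred generating sets. -/
def DPrefGen (lt : Rule A → Rule A → Prop) (P R : Set (Rule A)) : Prop :=
  R = MP (dReduct lt P R)

/-- D-preferred answer sets. -/
def DPrefAnswerSet (lt : Rule A → Rule A → Prop) (P : Set (Rule A))
    (S : Set (Lit A)) : Prop :=
  Consistent S ∧ ∃ R, DPrefGen lt P R ∧ headSet R = S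

/-- Stratified programs. -/
def Stratified (P : Set (Rule A)) : Prop :=
  ∃ lam : Lit A → ℕ, ∀ r ∈ P,
    (∀ l ∈ r.pos, lam l ≤ lam r.head) ∧ (∀ l ∈ r.neg, lam l < lam r.head)

/-!
Let `R` be a GNO-preferred generating set and take for `E` the fragments contained in `R`.
Since `R` is a generating set, no rule of `R` is defeated by `R`, so no member of `E` defeats
another and `E` lies in its own preferred reduct. Conversely, let a fragment `X` survive the
preferred reduct. If a rule `x ∈ X` were removed by the GNO reduct, it would be defeated by the
fragment `T(x, R) ∈ E`; then `X` must override `T(x, R)`, which needs a rule of `T(x, R)` below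
`x`, whereas `T(x, R)` only contains rules not below `x`. So `X` lies in the GNO reduct, and being
a fragment it is derived inside `MP (gnoReduct lt P R) = R`.
-/

lemma headSet_mono {R₁ R₂ : Set (Rule A)} (h : R₁ ⊆ R₂) : headSet R₁ ⊆ headSet R₂ :=
  Set.image_mono h

lemma MP_subset (Q : Set (Rule A)) : MP Q ⊆ Q :=
  Set.sInter_subset_of_mem ⟨Set.Subset.rfl, fun _ hr _ => hr⟩

lemma MP_subset_of_posSat {Q Z : Set (Rule A)} (h : PosSat Q Z) : MP Q ⊆ Z :=
  Set.sInter_subset_of_mem h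

lemma posSat_MP (Q : Set (Rule A)) : PosSat Q (MP Q) := by
  refine ⟨MP_subset Q, fun r hr hpos => Set.mem_sInter.2 fun Z hZ => ?_⟩
  exact hZ.2 r hr (hpos.trans (headSet_mono (Set.sInter_subset_of_mem hZ)))

lemma MP_MP (Q : Set (Rule A)) : MP (MP Q) = MP Q := by
  refine (MP_subset _).antisymm (MP_subset_of_posSat ⟨(MP_subset _).trans (MP_subset _), ?_⟩)
  intro r hr hpos
  have hrQ : r ∈ MP Q := (posSat_MP Q).2 r hr (hpos.trans (headSet_mono (MP_subset _)))
  exact (posSat_MP (MP Q)).2 r hrQ hpos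

lemma subset_of_MP_eq_self {X R : Set (Rule A)} (hX : MP X = X)
    (hR : ∀ x ∈ X, x.pos ⊆ headSet R → x ∈ R) : X ⊆ R := by
  have hsat : PosSat X (X ∩ R) :=
    ⟨Set.inter_subset_left, fun x hx hpos =>
      ⟨hx, hR x hx (hpos.trans (headSet_mono Set.inter_subset_right))⟩⟩
  rw [← hX]
  exact (MP_subset_of_posSat hsat).trans Set.inter_subset_right

lemma Frag_mono {R P : Set (Rule A)} (h : R ⊆ P) : Frag R ⊆ Frag P :=
  fun _ hX => ⟨hX.1.trans h, hX.2⟩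

lemma sUnion_Frag {R : Set (Rule A)} (hR : MP R = R) : ⋃₀ Frag R = R :=
  (Set.sUnion_subset fun _ hX => hX.1).antisymm (Set.subset_sUnion_of_mem ⟨le_rfl, hR⟩)

lemma Trules_mem_Frag (lt : Rule A → Rule A → Prop) (r : Rule A) (R : Set (Rule A)) :
    Trules lt r R ∈ Frag R :=
  ⟨(MP_subset _).trans (Set.sep_subset _ _), MP_MP _⟩

lemma GenSet.MP_eq {P R : Set (Rule A)} (h : GenSet P R) : MP R = R := by
  conv_lhs => rw [h.2]
  rw [MP_MP, ← h.2]

lemma GenSet.not_defeatsSet {P R X Y : Set (Rule A)} (h : GenSet P R) (hX : X ⊆ R)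
    (hY : Y ⊆ R) : ¬ defeatsSet Y X := by
  rintro ⟨r, hrX, l, hlY, hlr⟩
  have hr : r ∈ reduct P R := MP_subset _ (h.2 ▸ hX hrX)
  exact hr.2 ⟨l, headSet_mono hY hlY, hlr⟩

lemma mem_gnoReduct_of_mem_prefFragReduct {lt : Rule A → Rule A → Prop} {P R X : Set (Rule A)}
    (hX : X ∈ prefFragReduct lt P (Frag R)) {x : Rule A} (hx : x ∈ X) :
    x ∈ gnoReduct lt P R := by
  refine ⟨hX.1.1 hx, fun ⟨l, hlx, hlT⟩ => ?_⟩
  have hdefeat : defeatsRule (Trules lt x R) x := ⟨l, hlT, hlx⟩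
  have hover : Overrides lt X (Trules lt x R) := by
    by_contra hnot
    exact hX.2 ⟨_, Trules_mem_Frag lt x R, ⟨x, hx, hdefeat⟩, hnot⟩
  obtain ⟨r, hrT, -, hrx⟩ := hover.2 x hx hdefeat
  exact (MP_subset _ hrT).2 hrx

lemma GNOPrefGen.prefFragReduct_Frag {lt : Rule A → Rule A → Prop} {P R : Set (Rule A)}
    (h : GNOPrefGen lt P R) : prefFragReduct lt P (Frag R) = Frag R := by
  apply Set.Subset.antisymm
  · intro X hX
    refine ⟨subset_of_MP_eq_self hX.1.2 fun x hx hpos => ?_, hX.1.2⟩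
    rw [h.2]
    exact (posSat_MP _).2 x (mem_gnoReduct_of_mem_prefFragReduct hX hx) (h.2 ▸ hpos)
  · intro X hX
    exact ⟨Frag_mono h.1.1 hX, fun ⟨Y, hY, hYX, _⟩ => h.1.not_defeatsSet hX.1 hY.1 hYX⟩

theorem gno_subset_g_general (P : Set (Rule A))
    (lt : Rule A → Rule A → Prop)
    (S : Set (Lit A)) (h : GNOPrefAnswerSet lt P S) :
    GPrefAnswerSet lt P S := by
  obtain ⟨hcons, R, hR, rfl⟩ := h
  refine ⟨hcons, Frag R, ⟨Frag_mono hR.1.1, hR.prefFragReduct_Frag⟩, ?_⟩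
  rw [sUnion_Frag hR.1.MP_eq]

/-- GNO ⊆ G. -/
theorem gno_subset_g (P : Set (Rule A)) (hP : P.Finite)
    (lt : Rule A → Rule A → Prop) (htrans : Transitive lt)
    (hasymm : ∀ r₁ r₂, lt r₁ r₂ → ¬ lt r₂ r₁)
    (S : Set (Lit A)) (h : GNOPrefAnswerSet lt P S) :
    GPrefAnswerSet lt P S :=
  gno_subset_g_general P lt S h
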